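/- arXiv:0709.1557 — 2 statements merged into one kernel-verified Lean document; each statement's English description precedes it below -/
import Mathlib

section
/- Let K be a semigroup, (X, ‖·‖) a seminormed vector space, and for each g ∈ K a linear map U_g : X → X such that U_g ∘ U_h = U_{gh} and ‖U_g x‖ ≥ ‖x‖ for all g,h ∈ K and x ∈ X. Suppose the orbit B = {U_g x₀ : g ∈ K} of some x₀ ∈ X is totally bounded. Then for each ε > 0 the set E = {g ∈ K : ‖U_g x₀ − x₀‖ < ε} is relatively dense in K, i.e., there exist r ∈ ℕ and g₁,…,g_r ∈ K such that E ∩ {g g₁, …, g g_r} ≠ ∅ for every g ∈ K. -/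
/-- powers in a semigroup: `pw g n = g^(n+1)` -/
private def pw {K : Type*} [Semigroup K] (g : K) : ℕ → K
  | 0 => g
  | n + 1 => g * pw g n

private theorem pw_comm {K : Type*} [Semigroup K] (g : K) (n : ℕ) :
    pw g n * g = g * pw g n := by
  induction n with
  | zero => rfl
  | succ n ih => show g * pw g n * g = _; rw [mul_assoc, ih, pw]

/-- Proposition 5.6: if the orbit of `x₀` under norm-expanding linear maps
`U_g` (indexed by a semigroup) is totally bounded, then for every `ε > 0` the
return set `{g : ‖U_g x₀ − x₀‖ < ε}` is relatively dense. -/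
theorem stmt5 {K : Type*} [Semigroup K]
    {X : Type*} [SeminormedAddCommGroup X] [Module ℝ X]
    (U : K → X →ₗ[ℝ] X)
    (hcomp : ∀ g h : K, (U g).comp (U h) = U (g * h))
    (hexp : ∀ (g : K) (x : X), ‖x‖ ≤ ‖U g x‖)
    (x₀ : X) (htb : TotallyBounded (Set.range fun g => U g x₀))
    (ε : ℝ) (hε : 0 < ε) :
    ∃ (r : ℕ) (gs : Fin r → K), ∀ g : K, ∃ j, ‖U (g * gs j) x₀ - x₀‖ < ε := by
  classical
  set δ := ε / 8 with hδdef
  have hδ : 0 < δ := by positivity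
  have hUapp : ∀ a b : K, ∀ x : X, U a (U b x) = U (a * b) x := by
    intro a b x
    calc U a (U b x) = ((U a).comp (U b)) x := rfl
    _ = U (a * b) x := by rw [hcomp a b]
  -- extract a finite δ-net with centers in the orbit
  obtain ⟨t, hts, htf, htcov⟩ :=
    totallyBounded_iff_subset.1 htb {p : X × X | dist p.1 p.2 < δ}
      (Metric.dist_mem_uniformity hδ)
  obtain ⟨r, e, hte⟩ := htf.fin_param
  have hsel : ∀ j : Fin r, ∃ k : K, U k x₀ = e j := by
    intro j
    have : e j ∈ t := hte.2 ▸ Set.mem_range_self j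
    exact hts this
  choose h hh using hsel
  refine ⟨r, h, ?_⟩
  intro g
  set f : X → X := fun x => U g x with hf
  -- iterate formula
  have hiter : ∀ (n : ℕ) (x : X), f^[n + 1] x = U (pw g n) x := by
    intro n
    induction n with
    | zero => intro x; simp [pw, hf]
    | succ n ih =>
        intro x
        rw [Function.iterate_succ_apply, ih (f x)]
        show U (pw g n) (U g x) = _
        rw [hUapp, pw_comm, pw]
  -- expansion along iterates
  have hmono : ∀ (n : ℕ) (x y : X), ‖x - y‖ ≤ ‖f^[n] x - f^[n] y‖ := by
    intro n x y
    cases n with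
    | zero => simp
    | succ n =>
        rw [hiter n x, hiter n y, ← map_sub]
        exact hexp _ _
  have hmono1 : ∀ (n : ℕ) (x y : X), ‖f x - f y‖ ≤ ‖f^[n + 1] x - f^[n + 1] y‖ := by
    intro n x y
    rw [Function.iterate_succ_apply, Function.iterate_succ_apply]
    exact hmono n (f x) (f y)
  -- the net property
  have hnet : ∀ a : K, ∃ j : Fin r, ‖U a x₀ - U (h j) x₀‖ < δ := by
    intro a
    have hmem : U a x₀ ∈ Set.range fun g => U g x₀ := Set.mem_range_self a
    obtain ⟨y, hy, hxy⟩ := Set.mem_iUnion₂.1 (htcov hmem)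
    rw [← hte.2] at hy
    obtain ⟨j, rfl⟩ := hy
    refine ⟨j, ?_⟩
    rw [hh j]
    simpa [dist_eq_norm] using hxy
  -- iterates of orbit points are orbit points
  have horb : ∀ (n : ℕ) (a : K), f^[n + 1] (U a x₀) = U (pw g n * a) x₀ := by
    intro n a
    rw [hiter n (U a x₀), hUapp]
  -- Step 2: density at x₀
  have hdense : ∃ c : K, ‖U (g * c) x₀ - x₀‖ < 2 * δ := by
    have hsel2 : ∀ n : ℕ, ∃ j : Fin r, ‖f^[2 * n + 2] x₀ - U (h j) x₀‖ < δ := by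
      intro n
      rw [show 2 * n + 2 = (2 * n + 1) + 1 by ring, hiter]
      exact hnet _
    choose J2 hJ2 using hsel2
    obtain ⟨p, q, hpq, heq⟩ :=
      Fintype.exists_ne_map_eq_of_card_lt (fun n : Fin (r + 1) => J2 n) (by simp)
    have key2 : ∀ m n : ℕ, m < n → J2 m = J2 n → ∃ c : K, ‖U (g * c) x₀ - x₀‖ < 2 * δ := by
      intro m n hmn hJ
      obtain ⟨s, rfl⟩ : ∃ s, n = m + s + 1 := ⟨n - m - 1, by omega⟩
      have h1 : ‖f^[2 * m + 2] x₀ - f^[2 * (m + s + 1) + 2] x₀‖ < 2 * δ := by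
        calc ‖f^[2 * m + 2] x₀ - f^[2 * (m + s + 1) + 2] x₀‖
            ≤ ‖f^[2 * m + 2] x₀ - U (h (J2 m)) x₀‖ +
              ‖U (h (J2 m)) x₀ - f^[2 * (m + s + 1) + 2] x₀‖ := norm_sub_le_norm_sub_add_norm_sub _ _ _
          _ < δ + δ := by
              refine add_lt_add (hJ2 m) ?_
              rw [norm_sub_rev, hJ]
              exact hJ2 (m + s + 1)
          _ = 2 * δ := by ring
      have h2 : ‖x₀ - f^[2 * s + 2] x₀‖ ≤ ‖f^[2 * m + 2] x₀ - f^[2 * (m + s + 1) + 2] x₀‖ := by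
        have hadd : f^[2 * m + 2] (f^[2 * s + 2] x₀) = f^[2 * (m + s + 1) + 2] x₀ := by
          rw [← Function.iterate_add_apply]
          congr 1
          ring
        have := hmono (2 * m + 2) x₀ (f^[2 * s + 2] x₀)
        rwa [hadd] at this
      refine ⟨pw g (2 * s), ?_⟩
      have h3 : f^[2 * s + 2] x₀ = U (g * pw g (2 * s)) x₀ := by
        rw [show 2 * s + 2 = (2 * s + 1) + 1 by ring, hiter, pw]
      rw [← h3, norm_sub_rev]
      exact lt_of_le_of_lt h2 h1
    rcases hpq.lt_or_gt with hlt | hlt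
    · exact key2 p q (by exact_mod_cast hlt) heq
    · exact key2 q p (by exact_mod_cast hlt) heq.symm
  -- Step 1: near-isometry on the orbit
  have key1 : ∀ a b : K, ‖f (U a x₀) - f (U b x₀)‖ ≤ ‖U a x₀ - U b x₀‖ + 4 * δ := by
    intro a b
    have hsel3 : ∀ n : ℕ, ∃ jk : Fin r × Fin r,
        ‖f^[n] (U a x₀) - U (h jk.1) x₀‖ < δ ∧ ‖f^[n] (U b x₀) - U (h jk.2) x₀‖ < δ := by
      intro n
      cases n with
      | zero =>
          obtain ⟨j1, hj1⟩ := hnet a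
          obtain ⟨j2, hj2⟩ := hnet b
          exact ⟨(j1, j2), by simpa using hj1, by simpa using hj2⟩
      | succ n =>
          obtain ⟨j1, hj1⟩ := hnet (pw g n * a)
          obtain ⟨j2, hj2⟩ := hnet (pw g n * b)
          exact ⟨(j1, j2), by rw [horb n a]; exact hj1, by rw [horb n b]; exact hj2⟩
    choose J3 hJ3a hJ3b using hsel3
    obtain ⟨p, q, hpq, heq⟩ :=
      Fintype.exists_ne_map_eq_of_card_lt (fun n : Fin (r * r + 1) => J3 n)
        (by simp)
    have recur : ∀ (u : X) (J : ℕ → Fin r), (∀ n, ‖f^[n] u - U (h (J n)) x₀‖ < δ) →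
        ∀ m n s : ℕ, n = m + s + 1 → J m = J n → ‖u - f^[s + 1] u‖ < 2 * δ := by
      intro u J hJ m n s hns hJeq
      subst hns
      have h1 : ‖f^[m] u - f^[m + s + 1] u‖ < 2 * δ := by
        calc ‖f^[m] u - f^[m + s + 1] u‖
            ≤ ‖f^[m] u - U (h (J m)) x₀‖ + ‖U (h (J m)) x₀ - f^[m + s + 1] u‖ :=
              norm_sub_le_norm_sub_add_norm_sub _ _ _
          _ < δ + δ := by
              refine add_lt_add (hJ m) ?_
              rw [norm_sub_rev, hJeq]
              exact hJ (m + s + 1)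
          _ = 2 * δ := by ring
      have hadd : f^[m] (f^[s + 1] u) = f^[m + s + 1] u := by
        have hn : m + (s + 1) = m + s + 1 := by omega
        rw [← hn]
        exact (Function.iterate_add_apply f m (s + 1) u).symm
      have := hmono m u (f^[s + 1] u)
      rw [hadd] at this
      exact lt_of_le_of_lt this h1
    have main : ∀ m n : ℕ, m < n → J3 m = J3 n →
        ‖f (U a x₀) - f (U b x₀)‖ ≤ ‖U a x₀ - U b x₀‖ + 4 * δ := by
      intro m n hmn hJ
      obtain ⟨s, rfl⟩ : ∃ s, n = m + s + 1 := ⟨n - m - 1, by omega⟩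
      have hra : ‖U a x₀ - f^[s + 1] (U a x₀)‖ < 2 * δ :=
        recur (U a x₀) (fun n => (J3 n).1) hJ3a m (m + s + 1) s rfl (congrArg Prod.fst hJ)
      have hrb : ‖U b x₀ - f^[s + 1] (U b x₀)‖ < 2 * δ :=
        recur (U b x₀) (fun n => (J3 n).2) hJ3b m (m + s + 1) s rfl (congrArg Prod.snd hJ)
      calc ‖f (U a x₀) - f (U b x₀)‖
          ≤ ‖f^[s + 1] (U a x₀) - f^[s + 1] (U b x₀)‖ := hmono1 s _ _
        _ ≤ ‖f^[s + 1] (U a x₀) - U a x₀‖ + ‖U a x₀ - U b x₀‖ +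
            ‖U b x₀ - f^[s + 1] (U b x₀)‖ := by
              have t1 := norm_sub_le_norm_sub_add_norm_sub (f^[s + 1] (U a x₀)) (U a x₀)
                (f^[s + 1] (U b x₀))
              have t2 := norm_sub_le_norm_sub_add_norm_sub (U a x₀) (U b x₀)
                (f^[s + 1] (U b x₀))
              linarith
        _ ≤ ‖U a x₀ - U b x₀‖ + 4 * δ := by
              rw [norm_sub_rev (f^[s + 1] (U a x₀))]
              linarith
    rcases hpq.lt_or_gt with hlt | hlt
    · exact main p q (by exact_mod_cast hlt) heq
    · exact main q p (by exact_mod_cast hlt) heq.symm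
  -- assemble
  obtain ⟨c, hc⟩ := hdense
  obtain ⟨j, hj⟩ := hnet c
  refine ⟨j, ?_⟩
  have hfc : f (U c x₀) = U (g * c) x₀ := hUapp g c x₀
  have hfj : f (U (h j) x₀) = U (g * h j) x₀ := hUapp g (h j) x₀
  have hk := key1 c (h j)
  rw [hfc, hfj] at hk
  calc ‖U (g * h j) x₀ - x₀‖
      ≤ ‖U (g * h j) x₀ - U (g * c) x₀‖ + ‖U (g * c) x₀ - x₀‖ :=
        norm_sub_le_norm_sub_add_norm_sub _ _ _
    _ < (δ + 4 * δ) + 2 * δ := by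
        refine add_lt_add_of_le_of_lt ?_ hc
        rw [norm_sub_rev]
        calc ‖U (g * c) x₀ - U (g * h j) x₀‖ ≤ ‖U c x₀ - U (h j) x₀‖ + 4 * δ := hk
          _ ≤ δ + 4 * δ := by linarith
    _ < ε := by rw [hδdef]; linarith
end

section
/- Let A be a unital *-algebra with a positive linear functional ω (so ‖a‖_ω := √(ω(a*a)) is a seminorm), K a semigroup, and τ_g : A → A linear maps with τ_g ∘ τ_h = τ_{gh} and ‖τ_g(a)‖_ω = ‖a‖_ω for all g,h ∈ K, a ∈ A. Suppose the orbit {τ_g(a) : g ∈ K} is totally bounded in (A, ‖·‖_ω). Then for any ε > 0 and any m₀,…,m_k ∈ ℕ ∪ {0}, the set E = {g ∈ K : ‖τ_{g^{m_j}}(a) − a‖_ω < ε for all j = 0,…,k} is relatively dense in K. -/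
theorem aux_triangle {A : Type*} [Ring A] [StarRing A] [Algebra ℂ A]
    (ω : A →ₗ[ℂ] ℂ) (hωpos : ∀ a : A, 0 ≤ (ω (star a * a)).re)
    (x y : A) :
    Real.sqrt (ω (star (x + y) * (x + y))).re ≤
      Real.sqrt (ω (star x * x)).re + Real.sqrt (ω (star y * y)).re := by
  set Qx := (ω (star x * x)).re with hQx
  set Qy := (ω (star y * y)).re with hQy
  set S := (ω (star x * y)).re + (ω (star y * x)).re with hS
  have hint : ∀ p q : ℤ, 0 ≤ Qx * (p:ℝ)^2 + S * ((p:ℝ)*(q:ℝ)) + Qy * (q:ℝ)^2 := by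
    intro p q
    have h := hωpos (p • x + q • y)
    have hexp : (ω (star (p • x + q • y) * (p • x + q • y))).re
        = Qx * (p:ℝ)^2 + S * ((p:ℝ)*(q:ℝ)) + Qy * (q:ℝ)^2 := by
      rw [star_add, star_zsmul, star_zsmul]
      simp only [add_mul, mul_add, smul_mul_assoc, mul_smul_comm, smul_smul,
        map_add, map_zsmul]
      simp only [zsmul_eq_mul, Complex.add_re, Complex.mul_re,
        Complex.intCast_re, Complex.intCast_im]
      push_cast
      ring
    rw [hexp] at h
    exact h
  have hrat : ∀ q : ℚ, 0 ≤ Qy * (q:ℝ)^2 + S * (q:ℝ) + Qx := by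
    intro q
    have hd : (0:ℝ) < (q.den:ℝ) := by exact_mod_cast q.pos
    have hn : (q.num:ℝ) = (q:ℝ) * (q.den:ℝ) := by
      rw [Rat.cast_def]
      field_simp
    have key := hint q.den q.num
    rw [hn] at key
    push_cast at key
    have key2 : 0 ≤ (Qy * (q:ℝ)^2 + S * (q:ℝ) + Qx) * ((q.den:ℝ) * (q.den:ℝ)) := by
      linear_combination key
    nlinarith [key2, mul_pos hd hd]
  have h0 : ∀ t : ℝ, 0 ≤ Qy * (t * t) + S * t + Qx := by
    intro t
    by_contra hneg
    push_neg at hneg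
    have hcont : Continuous fun u : ℝ => Qy * (u * u) + S * u + Qx :=
      ((continuous_const.mul (continuous_id.mul continuous_id)).add
        (continuous_const.mul continuous_id)).add continuous_const
    have hopen : IsOpen {u : ℝ | Qy * (u * u) + S * u + Qx < 0} :=
      isOpen_lt hcont continuous_const
    obtain ⟨q, hq⟩ := Rat.denseRange_cast.exists_mem_open hopen ⟨t, hneg⟩
    have := hrat q
    simp only [Set.mem_setOf_eq] at hq
    nlinarith [this, hq]
  have hd := discrim_le_zero h0
  rw [discrim] at hd
  have hQx0 : 0 ≤ Qx := hωpos x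
  have hQy0 : 0 ≤ Qy := hωpos y
  have hS2 : S^2 ≤ (2 * Real.sqrt Qx * Real.sqrt Qy)^2 := by
    have h2 : (2 * Real.sqrt Qx * Real.sqrt Qy)^2 = 4 * Qx * Qy := by
      rw [mul_pow, mul_pow, Real.sq_sqrt hQx0, Real.sq_sqrt hQy0]; ring
    rw [h2]; nlinarith [hd]
  have hSle : S ≤ 2 * Real.sqrt Qx * Real.sqrt Qy := by
    have h3 := Real.sqrt_le_sqrt hS2
    rw [Real.sqrt_sq_eq_abs, Real.sqrt_sq (by positivity)] at h3
    exact le_trans (le_abs_self S) h3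
  have hfin : (ω (star (x + y) * (x + y))).re = Qy + S + Qx := by
    have h := hint 1 1
    --直接展開
    have hexp : (ω (star (x + y) * (x + y))).re = Qx + S + Qy := by
      rw [star_add]
      simp only [add_mul, mul_add, map_add, Complex.add_re]
      ring
    rw [hexp]; ring
  have hfin2 : (ω (star (x + y) * (x + y))).re ≤ (Real.sqrt Qx + Real.sqrt Qy)^2 := by
    rw [hfin]
    nlinarith [Real.sq_sqrt hQx0, Real.sq_sqrt hQy0, hSle]
  calc Real.sqrt (ω (star (x + y) * (x + y))).re
      ≤ Real.sqrt ((Real.sqrt Qx + Real.sqrt Qy)^2) := Real.sqrt_le_sqrt hfin2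
    _ = Real.sqrt Qx + Real.sqrt Qy := Real.sqrt_sq (by positivity)


/-- Corollary 5.7: for a compact system `(A, ω, τ, K)` (orbits totally bounded in
the seminorm `‖a‖_ω = √(ω(a*a))`), the set of `g ∈ K` with
`‖τ_{g^{m_j}}(a) − a‖_ω < ε` for all `j` is relatively dense in `K`.
Here `τ_{g^m}(a)` is encoded as the `m`-fold iterate `(τ g)^[m] a`, which by the
composition law equals `τ_{g^m}(a)` for `m ≥ 1` and equals `a` for `m = 0`. -/
theorem stmt6 {A : Type*} [Ring A] [StarRing A] [Algebra ℂ A]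
    (ω : A →ₗ[ℂ] ℂ) (hωpos : ∀ a : A, 0 ≤ (ω (star a * a)).re)
    {K : Type*} [Semigroup K]
    (τ : K → A →ₗ[ℂ] A)
    (hcomp : ∀ g h : K, (τ g).comp (τ h) = τ (g * h))
    (hiso : ∀ (g : K) (a : A),
      Real.sqrt (ω (star (τ g a) * τ g a)).re = Real.sqrt (ω (star a * a)).re)
    (a : A)
    (htb : ∀ ε > (0 : ℝ), ∃ s : Finset A, ∀ g : K, ∃ y ∈ s,
      Real.sqrt (ω (star (τ g a - y) * (τ g a - y))).re < ε)
    (ε : ℝ) (hε : 0 < ε) (k : ℕ) (m : Fin (k + 1) → ℕ) :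
    ∃ (r : ℕ) (gs : Fin r → K), ∀ g : K, ∃ i, ∀ j,
      Real.sqrt (ω (star ((fun b => τ (g * gs i) b)^[m j] a - a) *
        ((fun b => τ (g * gs i) b)^[m j] a - a))).re < ε := by
  classical
  set N : A → ℝ := fun x => Real.sqrt (ω (star x * x)).re with hNdef
  have hNtri : ∀ x y : A, N (x + y) ≤ N x + N y := fun x y => aux_triangle ω hωpos x y
  have hNsymm : ∀ u v : A, N (u - v) = N (v - u) := by
    intro u v
    have h1 : star (u - v) * (u - v) = star (v - u) * (v - u) := by
      have h2 : v - u = -(u - v) := (neg_sub u v).symm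
      rw [h2, star_neg, neg_mul_neg]
    show Real.sqrt (ω (star (u - v) * (u - v))).re = Real.sqrt (ω (star (v - u) * (v - u))).re
    rw [h1]
  have hN3 : ∀ u v w : A, N (u - w) ≤ N (u - v) + N (v - w) := by
    intro u v w
    have h := hNtri (u - v) (v - w)
    rw [sub_add_sub_cancel] at h
    exact h
  have hN0 : N 0 = 0 := by
    show Real.sqrt (ω (star (0:A) * 0)).re = 0
    simp
  have hNiso : ∀ (g : K) (x : A), N (τ g x) = N x := fun g x => hiso g x
  have hNdiff : ∀ (g : K) (x y : A), N (τ g x - τ g y) = N (x - y) := by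
    intro g x y
    rw [← map_sub]
    exact hNiso g _
  have hc : ∀ (g h : K) (x : A), τ g (τ h x) = τ (g * h) x := by
    intro g h x
    exact LinearMap.congr_fun (hcomp g h) x
  have hmb : ∀ (h : K) (n : ℕ), N ((fun b => τ h b)^[n] a - a) ≤ n * N (τ h a - a) := by
    intro h n
    induction n with
    | zero => simp [hN0]
    | succ n ih =>
      have e1 : (fun b => τ h b)^[n+1] a = τ h ((fun b => τ h b)^[n] a) :=
        Function.iterate_succ_apply' _ _ _
      calc N ((fun b => τ h b)^[n+1] a - a)
          = N (τ h ((fun b => τ h b)^[n] a) - a) := by rw [e1]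
        _ ≤ N (τ h ((fun b => τ h b)^[n] a) - τ h a) + N (τ h a - a) := hN3 _ _ _
        _ = N ((fun b => τ h b)^[n] a - a) + N (τ h a - a) := by rw [hNdiff]
        _ ≤ n * N (τ h a - a) + N (τ h a - a) := by linarith
        _ = ((n+1 : ℕ) : ℝ) * N (τ h a - a) := by push_cast; ring
  set M : ℕ := Finset.univ.sup m with hMdef
  have hmM : ∀ j, m j ≤ M := fun j => Finset.le_sup (Finset.mem_univ j)
  set η : ℝ := ε / (3 * ((M:ℝ) + 1)) with hηdef
  have hηpos : 0 < η := by positivity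
  obtain ⟨s, hs0⟩ := htb (η/4) (by positivity)
  have hs : ∀ h : K, ∃ y ∈ s, N (τ h a - y) < η/4 := hs0
  set s' : Finset A := s.filter (fun y => ∃ h : K, N (τ h a - y) < η/4) with hs'def
  have hrepex : ∀ y : A, y ∈ s' → ∃ h : K, N (τ h a - y) < η/4 := by
    intro y hy
    exact (Finset.mem_filter.mp hy).2
  choose rep hrep using hrepex
  set c : {z : A // z ∈ s'} → K := fun z => rep z.1 z.2 with hcdef
  refine ⟨s'.card, fun i => c (s'.equivFin.symm i), ?_⟩
  intro g
  have hcov : ∀ h : K, ∃ i : Fin s'.card,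
      N (τ h a - τ (c (s'.equivFin.symm i)) a) < η/2 := by
    intro h
    obtain ⟨y, hy, hly⟩ := hs h
    have hy' : y ∈ s' := Finset.mem_filter.mpr ⟨hy, ⟨h, hly⟩⟩
    refine ⟨s'.equivFin ⟨y, hy'⟩, ?_⟩
    rw [Equiv.symm_apply_apply]
    have h2 := hrep y hy'
    calc N (τ h a - τ (c ⟨y, hy'⟩) a)
        ≤ N (τ h a - y) + N (y - τ (c ⟨y, hy'⟩) a) := hN3 _ _ _
      _ = N (τ h a - y) + N (τ (rep y hy') a - y) := by rw [hNsymm y]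
      _ < η/4 + η/4 := add_lt_add hly h2
      _ = η/2 := by ring
  set F : A → A := fun b => τ g b with hFdef
  have hFiso : ∀ (k' : ℕ) (x y : A), N (F^[k'] x - F^[k'] y) = N (x - y) := by
    intro k'
    induction k' with
    | zero => intro x y; simp
    | succ n ih =>
      intro x y
      rw [Function.iterate_succ_apply, Function.iterate_succ_apply, ih]
      exact hNdiff g x y
  have horb : ∀ n : ℕ, ∃ h : K, F^[n+1] a = τ h a := by
    intro n
    induction n with
    | zero => exact ⟨g, by simp [hFdef]⟩
    | succ n ih =>
      obtain ⟨h, hh⟩ := ih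
      refine ⟨g * h, ?_⟩
      rw [Function.iterate_succ_apply', hh]
      exact hc g h a
  have hφ : ∀ n : Fin (s'.card + 1), ∃ i : Fin s'.card,
      N (F^[(n:ℕ)+1] a - τ (c (s'.equivFin.symm i)) a) < η/2 := by
    intro n
    obtain ⟨h, hh⟩ := horb n
    rw [hh]
    exact hcov h
  choose φ hφ' using hφ
  obtain ⟨n, n', hne, hmap⟩ := Fintype.exists_ne_map_eq_of_card_lt φ
    (by simpa using Nat.lt_succ_self s'.card)
  have main : ∀ n n' : Fin (s'.card+1), (n:ℕ) < (n':ℕ) → φ n = φ n' →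
      ∃ p : ℕ, 1 ≤ p ∧ N (F^[p] a - a) < η := by
    intro n n' hlt hfe
    refine ⟨(n':ℕ) - (n:ℕ), by omega, ?_⟩
    have e : ((n':ℕ)+1) = ((n':ℕ) - (n:ℕ)) + ((n:ℕ)+1) := by omega
    have e2 : F^[(n':ℕ)+1] a = F^[(n:ℕ)+1] (F^[(n':ℕ)-(n:ℕ)] a) := by
      conv_lhs => rw [e]
      rw [Nat.add_comm, Function.iterate_add_apply]
    have d1 := hφ' n'
    have d2 := hφ' n
    rw [hfe] at d2
    have hlt2 : N (F^[(n':ℕ)+1] a - F^[(n:ℕ)+1] a) < η := by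
      calc N (F^[(n':ℕ)+1] a - F^[(n:ℕ)+1] a)
          ≤ N (F^[(n':ℕ)+1] a - τ (c (s'.equivFin.symm (φ n'))) a)
            + N (τ (c (s'.equivFin.symm (φ n'))) a - F^[(n:ℕ)+1] a) := hN3 _ _ _
        _ = N (F^[(n':ℕ)+1] a - τ (c (s'.equivFin.symm (φ n'))) a)
            + N (F^[(n:ℕ)+1] a - τ (c (s'.equivFin.symm (φ n'))) a) := by
              rw [hNsymm (τ (c (s'.equivFin.symm (φ n'))) a)]
        _ < η/2 + η/2 := add_lt_add d1 d2
        _ = η := by ring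
    rw [e2, hFiso ((n:ℕ)+1)] at hlt2
    exact hlt2
  have hkey : ∃ p : ℕ, 1 ≤ p ∧ N (F^[p] a - a) < η := by
    rcases lt_or_gt_of_ne hne with hlt | hlt
    · exact main n n' hlt hmap
    · exact main n' n hlt hmap.symm
  obtain ⟨p, hp1, hpN⟩ := hkey
  have hM2 : ∃ h' : K, N (τ (g * h') a - a) < 2 * η := by
    rcases Nat.lt_or_ge p 2 with hp2 | hp2
    · have hp : p = 1 := by omega
      rw [hp] at hpN
      have hpa : N (τ g a - a) < η := by
        have e6 : F^[1] a = τ g a := by simp [hFdef]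
        rw [e6] at hpN
        exact hpN
      refine ⟨g, ?_⟩
      have e3 : τ (g * g) a = τ g (τ g a) := (hc g g a).symm
      calc N (τ (g*g) a - a)
          ≤ N (τ (g*g) a - τ g a) + N (τ g a - a) := hN3 _ _ _
        _ = N (τ g (τ g a) - τ g a) + N (τ g a - a) := by rw [e3]
        _ = N (τ g a - a) + N (τ g a - a) := by rw [hNdiff]
        _ < 2 * η := by linarith
    · obtain ⟨h, hh⟩ := horb (p - 2)
      refine ⟨h, ?_⟩
      have e4 : p = (p - 1) + 1 := by omega
      have e5 : F^[p] a = τ (g * h) a := by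
        conv_lhs => rw [e4]
        rw [Function.iterate_succ_apply']
        rw [show F^[p-1] a = τ h a from by
          rw [show p - 1 = (p-2)+1 by omega]; exact hh]
        exact hc g h a
      rw [← e5]
      linarith
  obtain ⟨h', hh'⟩ := hM2
  obtain ⟨i, hi⟩ := hcov h'
  refine ⟨i, ?_⟩
  have hfinal : N (τ (g * c (s'.equivFin.symm i)) a - a) < 5 * η / 2 := by
    calc N (τ (g * c (s'.equivFin.symm i)) a - a)
        ≤ N (τ (g * c (s'.equivFin.symm i)) a - τ (g * h') a) + N (τ (g * h') a - a) :=
          hN3 _ _ _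
      _ = N (τ g (τ (c (s'.equivFin.symm i)) a) - τ g (τ h' a)) + N (τ (g * h') a - a) := by
          rw [hc, hc]
      _ = N (τ (c (s'.equivFin.symm i)) a - τ h' a) + N (τ (g * h') a - a) := by rw [hNdiff]
      _ = N (τ h' a - τ (c (s'.equivFin.symm i)) a) + N (τ (g * h') a - a) := by rw [hNsymm]
      _ < η/2 + 2*η := add_lt_add hi hh'
      _ = 5*η/2 := by ring
  intro j
  show N ((fun b => τ (g * c (s'.equivFin.symm i)) b)^[m j] a - a) < ε
  have h1 := hmb (g * c (s'.equivFin.symm i)) (m j)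
  by_cases hmj : m j = 0
  · rw [hmj]
    show N ((fun b => τ (g * c (s'.equivFin.symm i)) b)^[0] a - a) < ε
    rw [Function.iterate_zero_apply, sub_self, hN0]
    exact hε
  · have hmj1 : (0:ℝ) < (m j : ℝ) := by
      exact_mod_cast Nat.pos_of_ne_zero hmj
    have h2 : ((m j : ℝ)) * N (τ (g * c (s'.equivFin.symm i)) a - a)
        < (m j : ℝ) * (5*η/2) := mul_lt_mul_of_pos_left hfinal hmj1
    have h3 : ((m j:ℝ)) * (5*η/2) ≤ (M:ℝ) * (5*η/2) := by
      apply mul_le_mul_of_nonneg_right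
      · exact_mod_cast hmM j
      · positivity
    have h4 : (M:ℝ) * (5*η/2) < ε := by
      have hc0 : (0:ℝ) ≤ (M:ℝ) := Nat.cast_nonneg _
      have key : (M:ℝ) * (5 * (ε / (3*((M:ℝ)+1))) / 2) = ε * (5*(M:ℝ)) / (6*((M:ℝ)+1)) := by
        field_simp
        ring
      rw [hηdef, key, div_lt_iff₀ (by positivity)]
      nlinarith [mul_nonneg hε.le hc0]
    linarith
end
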